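/- arXiv:1602.01500 — 2 statements merged into one kernel-verified Lean document; each statement's English description precedes it below -/
import Mathlib

section
/- For 0 < q < 1 and a function f defined on the q-geometric set A_{q,b} = {b q^n : n ≥ 0}, the right-sided Riemann–Liouville q-fractional integral at x = b q^m equals b^α (1-q)^α ∑_{j=0}^m q^{jα} ((q^α;q)_{m-j}/(q;q)_{m-j}) f(b q^j). -/
open Filter

noncomputable section

namespace QFrac

variable (q : ℝ)

/-- infinite q-shifted factorial `(z;q)_∞` -/
def pochInf (z : ℝ) : ℝ := ∏' n : ℕ, (1 - z * q ^ n)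

/-- generalized q-shifted factorial `(z;q)_ν = (z;q)_∞ / (z q^ν;q)_∞` -/
def poch (z ν : ℝ) : ℝ := pochInf q z / pochInf q (z * q ^ ν)

/-- finite q-shifted factorial `(z;q)_k` -/
def pochN (z : ℝ) (k : ℕ) : ℝ := ∏ i ∈ Finset.range k, (1 - z * q ^ i)

/-- q-Gamma function -/
def qGamma (α : ℝ) : ℝ := pochInf q q / pochInf q (q ^ α) * (1 - q) ^ (1 - α)

/-- Jackson q-integral `∫_0^a f(t) d_q t` -/
def jackson (a : ℝ) (f : ℝ → ℝ) : ℝ := (1 - q) * a * ∑' n : ℕ, q ^ n * f (a * q ^ n)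

/-- Jackson q-integral `∫_c^b f(t) d_q t` -/
def jacksonI (c b : ℝ) (f : ℝ → ℝ) : ℝ := jackson q b f - jackson q c f

/-- left-sided Riemann–Liouville q-fractional integral `I^α_{q,0^+}` -/
def Ileft (α : ℝ) (f : ℝ → ℝ) (x : ℝ) : ℝ :=
  x ^ (α - 1) / qGamma q α * jackson q x (fun t => poch q (q * t / x) (α - 1) * f t)

/-- right-sided Riemann–Liouville q-fractional integral `I^α_{q,b^-}` -/
def Iright (b α : ℝ) (f : ℝ → ℝ) (x : ℝ) : ℝ :=
  (qGamma q α)⁻¹ *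
    jacksonI q (q * x) b (fun t => t ^ (α - 1) * poch q (q * x / t) (α - 1) * f t)

/-- Jackson q-derivative -/
def Dq (f : ℝ → ℝ) (x : ℝ) : ℝ := (f x - f (q * x)) / ((1 - q) * x)

/-- Jackson `q⁻¹`-derivative -/
def Dqinv (f : ℝ → ℝ) (x : ℝ) : ℝ := (f x - f (x / q)) / ((1 - q⁻¹) * x)

/-- left-sided Caputo q-fractional derivative of order `α ∈ (0,1)` -/
def CDleft (α : ℝ) (f : ℝ → ℝ) : ℝ → ℝ := Ileft q (1 - α) (Dq q f)

/-- left-sided Riemann–Liouville q-fractional derivative of order `α ∈ (0,1)` -/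
def DRLleft (α : ℝ) (f : ℝ → ℝ) : ℝ → ℝ := Dq q (Ileft q (1 - α) f)

/-- right-sided Riemann–Liouville q-fractional derivative of order `α ∈ (0,1)` -/
def DRLright (b α : ℝ) (f : ℝ → ℝ) (x : ℝ) : ℝ :=
  (-1 / q) * Dqinv q (fun t => Iright q b (1 - α) f t) x

/-- right-sided Caputo q-fractional derivative of order `α ∈ (0,1)` -/
def CDright (b α : ℝ) (f : ℝ → ℝ) (x : ℝ) : ℝ :=
  (-1 / q) * Iright q b (1 - α) (Dqinv q f) x

/-- `f ∈ L¹_q(A^*_{q,a})` -/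
def MemL1 (a : ℝ) (f : ℝ → ℝ) : Prop := Summable (fun n : ℕ => q ^ n * |f (a * q ^ n)|)

/-- `f ∈ L²_q(A^*_{q,a})` -/
def MemL2 (a : ℝ) (f : ℝ → ℝ) : Prop := Summable (fun n : ℕ => q ^ n * (f (a * q ^ n)) ^ 2)

/-- the `L²_q` norm -/
def norm2 (a : ℝ) (f : ℝ → ℝ) : ℝ := Real.sqrt (jackson q a (fun t => (f t) ^ 2))

/-- `f` is q-regular at zero (its value at `0` is the limit along the q-grid) -/
def qRegular (a : ℝ) (f : ℝ → ℝ) : Prop :=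
  Tendsto (fun n : ℕ => f (a * q ^ n)) atTop (nhds (f 0))

/-- the limit at zero along the q-grid exists -/
def qRegular' (a : ℝ) (f : ℝ → ℝ) : Prop :=
  ∃ L : ℝ, Tendsto (fun n : ℕ => f (a * q ^ n)) atTop (nhds L)

/-- sup norm on `A^*_{q,a}` -/
def supNorm (a : ℝ) (f : ℝ → ℝ) : ℝ := max (⨆ n : ℕ, |f (a * q ^ n)|) |f 0|

/-- bounded q-variation part of q-absolute continuity -/
def qACvar (a : ℝ) (f : ℝ → ℝ) : Prop :=
  ∃ K : ℝ, ∀ m N : ℕ,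
    ∑ j ∈ Finset.range N, |f (a * q ^ (m + j)) - f (a * q ^ (m + j + 1))| ≤ K

/-- q-absolute continuity on `A^*_{q,a}` -/
def qAC (a : ℝ) (f : ℝ → ℝ) : Prop := qRegular q a f ∧ qACvar q a f

/-- little q-Jacobi polynomial `p_n(x; q^A, q^B | q)` -/
def littleJacobi (n : ℕ) (A B x : ℝ) : ℝ :=
  ∑ k ∈ Finset.range (n + 1),
    pochN q (q ^ (-(n : ℝ))) k * pochN q (q ^ (A + B + (n : ℝ) + 1)) k /
      (pochN q (q ^ (A + 1)) k * pochN q q k) * (q * x) ^ k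

end QFrac

/-!
On the grid the kernel `(q x / t; q)_{α-1}` of `I^α_{q,b^-}` at `x = b q^m` vanishes at every node
`t = b q^n` with `n > m` and at every node of the lower integral from `0` to `q x`: there the
argument times a power of `q` equals `1`, so the infinite product `(z;q)_∞` in its numerator has a
zero factor. Only the nodes `t = b q^j`, `j ≤ m`, survive, where the kernel is
`(q^{m-j+1};q)_{α-1}`, and splitting `(z;q)_∞ = (z;q)_k (z q^k;q)_∞` in it and in `Γ_q(α)`
gives `Γ_q(α)⁻¹ (q^{k+1};q)_{α-1} = (1-q)^{α-1} (q^α;q)_k / (q;q)_k`.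
-/

namespace QFrac

open Finset

variable {q : ℝ}

theorem summable_norm_mul_pow (hq : |q| < 1) (z : ℝ) :
    Summable fun n : ℕ => ‖z * q ^ n‖ := by
  simpa [norm_mul, norm_pow] using
    (summable_geometric_of_lt_one (abs_nonneg q) hq).mul_left |z|

theorem multipliable_one_sub_mul_pow (hq : |q| < 1) (z : ℝ) :
    Multipliable fun n : ℕ => 1 - z * q ^ n := by
  simp only [sub_eq_add_neg]
  exact multipliable_one_add_of_summable (by simpa using summable_norm_mul_pow hq z)

theorem pochInf_eq_pochN_mul (hq : |q| < 1) (z : ℝ) (k : ℕ) :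
    pochInf q z = pochN q z k * pochInf q (z * q ^ k) := by
  have hshift : Multipliable fun n : ℕ => 1 - z * q ^ (n + k) := by
    simpa only [pow_add, mul_assoc, mul_comm (q ^ k)] using
      multipliable_one_sub_mul_pow hq (z * q ^ k)
  rw [pochInf, ← Multipliable.prod_mul_tprod_nat_mul' (f := fun n => 1 - z * q ^ n) hshift,
    pochN, pochInf]
  simp only [pow_add, mul_assoc, mul_comm (q ^ k)]

theorem pochInf_eq_zero {z : ℝ} (h : ∃ n : ℕ, z * q ^ n = 1) : pochInf q z = 0 :=
  tprod_of_exists_eq_zero (h.imp fun _ hn => by rw [hn, sub_self])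

theorem pochInf_ne_zero (hq : |q| < 1) {z : ℝ} (hz : |z| < 1) : pochInf q z ≠ 0 := by
  have hfactor (n : ℕ) : 1 - z * q ^ n ≠ 0 := by
    have habs : |z * q ^ n| < 1 := by
      rw [abs_mul, abs_pow]
      exact (mul_le_of_le_one_right (abs_nonneg z) (pow_le_one₀ (abs_nonneg q) hq.le)).trans_lt hz
    exact sub_ne_zero.2 fun h => by simp [← h] at habs
  simpa only [pochInf, ← sub_eq_add_neg] using tprod_one_add_ne_zero_of_summable
    (f := fun n : ℕ => -(z * q ^ n)) (by simpa only [← sub_eq_add_neg] using hfactor)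
    (by simpa using summable_norm_mul_pow hq z)

theorem poch_div_mul_pow_eq_zero (hq0 : q ≠ 0) {a : ℝ} (ha : a ≠ 0) (n : ℕ) (ν : ℝ) :
    poch q (a / (a * q ^ n)) ν = 0 := by
  rw [poch, pochInf_eq_zero ⟨n, by field_simp⟩, zero_div]

theorem qGamma_inv_mul_poch_pow_succ (hq0 : 0 < q) (hq1 : q < 1) {α : ℝ} (hα : 0 < α)
    (k : ℕ) :
    (qGamma q α)⁻¹ * poch q (q ^ (k + 1)) (α - 1) =
      (1 - q) ^ (α - 1) * (pochN q (q ^ α) k / pochN q q k) := by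
  have hq : |q| < 1 := abs_lt.2 ⟨by linarith, hq1⟩
  have hqα : |q ^ α| < 1 := by
    rw [abs_of_pos (Real.rpow_pos_of_pos hq0 α)]
    exact Real.rpow_lt_one hq0.le hq1 hα
  have hsplit_q : pochInf q q = pochN q q k * pochInf q (q ^ (k + 1)) := by
    rw [pow_succ', ← pochInf_eq_pochN_mul hq]
  have hsplit_qα := pochInf_eq_pochN_mul hq (q ^ α) k
  obtain ⟨hne_q, hne_q'⟩ := mul_ne_zero_iff.1 (hsplit_q ▸ pochInf_ne_zero hq hq)
  obtain ⟨hne_qα, hne_qα'⟩ := mul_ne_zero_iff.1 (hsplit_qα ▸ pochInf_ne_zero hq hqα)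
  have hexp : q ^ (k + 1) * q ^ (α - 1) = q ^ α * q ^ k := by
    rw [← Real.rpow_natCast, ← Real.rpow_natCast, ← Real.rpow_add hq0, ← Real.rpow_add hq0]
    push_cast
    ring_nf
  have hpow : (1 - q) ^ (α - 1) = ((1 - q) ^ (1 - α))⁻¹ := by
    rw [← Real.rpow_neg (by linarith), neg_sub]
  have hne_pow : (1 - q) ^ (1 - α) ≠ 0 := (Real.rpow_pos_of_pos (by linarith) _).ne'
  rw [qGamma, poch, hexp, hsplit_q, hsplit_qα, hpow]
  field_simp

theorem jackson_eq_sum_range {a : ℝ} {f : ℝ → ℝ} (N : ℕ)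
    (hf : ∀ n ≥ N, f (a * q ^ n) = 0) :
    jackson q a f = (1 - q) * a * ∑ n ∈ range N, q ^ n * f (a * q ^ n) := by
  rw [jackson, tsum_eq_sum (s := range N) fun n hn => by rw [hf n (by simpa using hn), mul_zero]]

theorem Iright_mul_pow_eq_sum (hq0 : q ≠ 0) {b : ℝ} (hb : b ≠ 0) (α : ℝ)
    (f : ℝ → ℝ) (m : ℕ) :
    Iright q b α f (b * q ^ m) = (qGamma q α)⁻¹ * ((1 - q) * b *
      ∑ j ∈ range (m + 1), q ^ j * ((b * q ^ j) ^ (α - 1) * poch q (q ^ (m - j + 1)) (α - 1) *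
        f (b * q ^ j))) := by
  set x := b * q ^ (m + 1) with hx
  have hx0 : x ≠ 0 := by positivity
  have hupper : ∀ n ≥ m + 1,
      (b * q ^ n) ^ (α - 1) * poch q (x / (b * q ^ n)) (α - 1) * f (b * q ^ n) = 0 := by
    intro n hn
    obtain ⟨k, rfl⟩ := Nat.exists_eq_add_of_le hn
    rw [pow_add, ← mul_assoc, poch_div_mul_pow_eq_zero hq0 hx0, mul_zero, zero_mul]
  have hlower : ∀ n ≥ 0,
      (x * q ^ n) ^ (α - 1) * poch q (x / (x * q ^ n)) (α - 1) * f (x * q ^ n) = 0 := by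
    intro n _
    rw [poch_div_mul_pow_eq_zero hq0 hx0, mul_zero, zero_mul]
  rw [Iright, jacksonI, show q * (b * q ^ m) = x by ring, jackson_eq_sum_range _ hupper,
    jackson_eq_sum_range _ hlower, sum_range_zero, mul_zero, sub_zero]
  congr 2
  refine sum_congr rfl fun j hj => ?_
  obtain ⟨k, rfl⟩ := Nat.exists_eq_add_of_le (Nat.lt_succ_iff.1 (mem_range.1 hj))
  have hkernel : x / (b * q ^ j) = q ^ (k + 1) := by
    rw [hx, div_eq_iff (by positivity)]
    ring
  rw [hkernel, Nat.add_sub_cancel_left]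

theorem qGamma_inv_mul_jackson_weight (hq : 0 < q) (hq1 : q < 1) {b α : ℝ} (hb : 0 < b)
    (hα : 0 < α) (j k : ℕ) :
    (qGamma q α)⁻¹ * ((1 - q) * b * (q ^ j * ((b * q ^ j) ^ (α - 1) *
      poch q (q ^ (k + 1)) (α - 1)))) =
      b ^ α * (1 - q) ^ α * (q ^ ((j : ℝ) * α) * (pochN q (q ^ α) k / pochN q q k)) := by
  have hself_mul_rpow : ∀ y : ℝ, y ≠ 0 → y * y ^ (α - 1) = y ^ α := fun y hy => by
    rw [Real.rpow_sub_one hy, mul_div_cancel₀ _ hy]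
  have hgrid : b * q ^ j * (b * q ^ j) ^ (α - 1) = b ^ α * q ^ ((j : ℝ) * α) := by
    rw [hself_mul_rpow _ (by positivity), Real.mul_rpow hb.le (by positivity),
      ← Real.rpow_natCast, ← Real.rpow_mul hq.le]
  have hscale := hself_mul_rpow (1 - q) (by linarith)
  linear_combination (1 - q) * b * q ^ j * (b * q ^ j) ^ (α - 1) *
      qGamma_inv_mul_poch_pow_succ hq hq1 hα k +
    (1 - q) * (1 - q) ^ (α - 1) * (pochN q (q ^ α) k / pochN q q k) * hgrid +
    b ^ α * q ^ ((j : ℝ) * α) * (pochN q (q ^ α) k / pochN q q k) * hscale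

end QFrac

/-- series representation of the right-sided q-fractional integral
on the grid `A_{q,b}`. -/
theorem stmt0 (q b α : ℝ) (hq : 0 < q) (hq1 : q < 1) (hb : 0 < b) (hα : 0 < α)
    (f : ℝ → ℝ) (m : ℕ) :
    QFrac.Iright q b α f (b * q ^ m) =
      b ^ α * (1 - q) ^ α *
        ∑ j ∈ Finset.range (m + 1),
          q ^ ((j : ℝ) * α) *
            (QFrac.pochN q (q ^ α) (m - j) / QFrac.pochN q q (m - j)) * f (b * q ^ j) := by
  rw [QFrac.Iright_mul_pow_eq_sum hq.ne' hb.ne', Finset.mul_sum, Finset.mul_sum, Finset.mul_sum]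
  refine Finset.sum_congr rfl fun j hj => ?_
  obtain ⟨k, rfl⟩ := Nat.exists_eq_add_of_le (Nat.lt_succ_iff.1 (Finset.mem_range.1 hj))
  rw [Nat.add_sub_cancel_left]
  linear_combination f (b * q ^ j) * QFrac.qGamma_inv_mul_jackson_weight hq hq1 hb hα j k
end
end

section
/- Let α > 1/2 and f ∈ L²_q(A*_{q,a}). Then I^α_{q,0^+} f is q-regular at zero and ‖I^α_{q,0^+} f‖_∞ ≤ M̃_α ‖f‖₂, where M̃_α = (a^{α−1/2}/Γ_q(α)) (∫_0^1 (qξ;q)²_{α−1} d_q ξ)^{1/2}. -/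
open Filter

noncomputable section

/-!
With `φ(ξ) = (qξ;q)_{α-1}`, which is bounded on the q-grid, `I^α f(x) = x^{α-1}/Γ_q(α) ∫_0^x φ(t/x) f(t) d_q t`.
For `x = a qⁿ`, the Cauchy–Schwarz inequality for the Jackson integral, the scaling
`∫_0^x φ(t/x)² d_q t = x ∫_0^1 φ² d_q ξ` and the monotonicity `∫_0^{aqⁿ} f² d_q t ≤ ∫_0^a f² d_q t`
give `|I^α f(aqⁿ)| ≤ (q^{α-1/2})ⁿ M̃_α ‖f‖₂`. Since `α > 1/2`, this is at most `M̃_α ‖f‖₂` and tends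
to `0 = I^α f(0)`.
-/

open Real

lemma Real.abs_tsum_mul_le_sqrt_mul_sqrt {ι : Type*} {u v : ι → ℝ}
    (hu : Summable fun i => u i ^ 2) (hv : Summable fun i => v i ^ 2) :
    |∑' i, u i * v i| ≤ √(∑' i, u i ^ 2) * √(∑' i, v i ^ 2) := by
  have huv : Summable fun i => u i * v i := by
    refine (hu.add hv).of_norm_bounded fun i => ?_
    rw [norm_mul, Real.norm_eq_abs, Real.norm_eq_abs]
    nlinarith [sq_abs (u i), sq_abs (v i), sq_nonneg (|u i| - |v i|)]
  refine le_of_tendsto' huv.hasSum.abs fun s => ?_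
  calc |∑ i ∈ s, u i * v i| ≤ ∑ i ∈ s, |u i| * |v i| := by
        simpa only [abs_mul] using Finset.abs_sum_le_sum_abs (fun i => u i * v i) s
    _ ≤ √(∑ i ∈ s, |u i| ^ 2) * √(∑ i ∈ s, |v i| ^ 2) := Real.sum_mul_le_sqrt_mul_sqrt s _ _
    _ ≤ √(∑' i, u i ^ 2) * √(∑' i, v i ^ 2) := by
        simp only [sq_abs]
        gcongr
        · exact hu.sum_le_tsum s fun i _ => sq_nonneg _
        · exact hv.sum_le_tsum s fun i _ => sq_nonneg _

namespace QFrac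

variable {q a x z w α : ℝ} {f g h : ℝ → ℝ}

lemma one_sub_mul_pow_pos (hq0 : 0 ≤ q) (hq1 : q ≤ 1) (hz : z < 1) (n : ℕ) :
    0 < 1 - z * q ^ n := by
  have h0 := pow_nonneg hq0 n
  have h1 := pow_le_one₀ hq0 hq1 (n := n)
  rcases le_or_gt z 0 with hz0 | hz0 <;> nlinarith

lemma summable_log_one_sub_mul_pow (hq0 : 0 ≤ q) (hq1 : q < 1) (z : ℝ) :
    Summable fun n : ℕ => Real.log (1 - z * q ^ n) := by
  simpa [sub_eq_add_neg] using
    Real.summable_log_one_add_of_summable ((summable_geometric_of_lt_one hq0 hq1).mul_left (-z))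

lemma pochInf_eq_exp_tsum_log (hq0 : 0 ≤ q) (hq1 : q < 1) (hz : z < 1) :
    pochInf q z = exp (∑' n : ℕ, Real.log (1 - z * q ^ n)) :=
  (Real.rexp_tsum_eq_tprod (one_sub_mul_pow_pos hq0 hq1.le hz)
    (summable_log_one_sub_mul_pow hq0 hq1 z)).symm

lemma pochInf_pos (hq0 : 0 ≤ q) (hq1 : q < 1) (hz : z < 1) : 0 < pochInf q z := by
  rw [pochInf_eq_exp_tsum_log hq0 hq1 hz]
  exact exp_pos _

lemma pochInf_anti (hq0 : 0 ≤ q) (hq1 : q < 1) (hzw : z ≤ w) (hw : w < 1) :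
    pochInf q w ≤ pochInf q z := by
  rw [pochInf_eq_exp_tsum_log hq0 hq1 hw, pochInf_eq_exp_tsum_log hq0 hq1 (hzw.trans_lt hw),
    exp_le_exp]
  refine (summable_log_one_sub_mul_pow hq0 hq1 w).tsum_le_tsum (fun n => ?_)
    (summable_log_one_sub_mul_pow hq0 hq1 z)
  exact Real.log_le_log (one_sub_mul_pow_pos hq0 hq1.le hw n)
    (by nlinarith [pow_nonneg hq0 n])

lemma pochInf_zero : pochInf q 0 = 1 := by
  simp [pochInf]

lemma pochInf_le_one (hq0 : 0 ≤ q) (hq1 : q < 1) (hz0 : 0 ≤ z) (hz : z < 1) :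
    pochInf q z ≤ 1 :=
  pochInf_zero (q := q) ▸ pochInf_anti hq0 hq1 hz0 hz

lemma qGamma_pos (hq0 : 0 ≤ q) (hq1 : q < 1) (hα : 0 < α) : 0 < qGamma q α :=
  mul_pos (div_pos (pochInf_pos hq0 hq1 hq1) (pochInf_pos hq0 hq1 (rpow_lt_one hq0 hq1 hα)))
    (rpow_pos_of_pos (sub_pos.2 hq1) _)

lemma abs_poch_le (hq : 0 < q) (hq1 : q < 1) (hα : 0 < α) (hz0 : 0 ≤ z) (hzq : z ≤ q) :
    |poch q z (α - 1)| ≤ (pochInf q (q ^ α))⁻¹ := by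
  have hqα : q ^ α < 1 := rpow_lt_one hq.le hq1 hα
  have hshift : z * q ^ (α - 1) ≤ q ^ α := by
    calc z * q ^ (α - 1) ≤ q * q ^ (α - 1) := by gcongr
      _ = q ^ α := by rw [rpow_sub_one hq.ne']; field_simp
  have hden : pochInf q (q ^ α) ≤ pochInf q (z * q ^ (α - 1)) :=
    pochInf_anti hq.le hq1 hshift hqα
  have hnum := pochInf_pos hq.le hq1 (hzq.trans_lt hq1)
  have hden0 := pochInf_pos hq.le hq1 hqα
  rw [poch, abs_of_pos (div_pos hnum (hden0.trans_le hden)), ← one_div]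
  exact div_le_div₀ zero_le_one (pochInf_le_one hq.le hq1 hz0 (hzq.trans_lt hq1)) hden0 hden

lemma MemL2.of_abs_le (hq0 : 0 ≤ q) (hq1 : q < 1) {C : ℝ} (hC : ∀ n : ℕ, |f (a * q ^ n)| ≤ C) :
    MemL2 q a f := by
  refine Summable.of_nonneg_of_le (fun n => by positivity) (fun n => ?_)
    ((summable_geometric_of_lt_one hq0 hq1).mul_right (C ^ 2))
  have : f (a * q ^ n) ^ 2 ≤ C ^ 2 := by
    rw [← sq_abs]
    exact pow_le_pow_left₀ (abs_nonneg _) (hC n) 2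
  exact mul_le_mul_of_nonneg_left this (pow_nonneg hq0 n)

lemma memL2_poch_kernel (hq : 0 < q) (hq1 : q < 1) (hα : 0 < α) :
    MemL2 q 1 (fun ξ => poch q (q * ξ) (α - 1)) :=
  MemL2.of_abs_le hq.le hq1 fun n =>
    abs_poch_le hq hq1 hα (by positivity)
      (by rw [one_mul]; exact mul_le_of_le_one_right hq.le (pow_le_one₀ hq.le hq1.le))

lemma MemL2.comp_div (hg : MemL2 q 1 g) (hx : x ≠ 0) : MemL2 q x (fun t => g (t / x)) := by
  simpa [MemL2, mul_div_cancel_left₀ _ hx] using hg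

lemma jackson_comp_div (hx : x ≠ 0) :
    jackson q x (fun t => g (t / x)) = x * jackson q 1 g := by
  simp only [jackson, mul_div_cancel_left₀ _ hx, one_mul, mul_one]
  ring

lemma MemL2.mul_pow (hq : 0 < q) (hf : MemL2 q a f) (n : ℕ) : MemL2 q (a * q ^ n) f := by
  have htail := (hf.comp_injective (add_left_injective n)).mul_left (q ^ n)⁻¹
  refine htail.congr fun k => ?_
  simp only [Function.comp, pow_add, mul_assoc]
  field_simp

lemma norm2_mul_pow_le (hq0 : 0 ≤ q) (hq1 : q ≤ 1) (ha : 0 ≤ a) (hf : MemL2 q a f) (n : ℕ) :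
    norm2 q (a * q ^ n) f ≤ norm2 q a f := by
  have htail : ∑' k : ℕ, q ^ (k + n) * f (a * q ^ (k + n)) ^ 2 ≤
      ∑' m : ℕ, q ^ m * f (a * q ^ m) ^ 2 :=
    (hf.comp_injective (add_left_injective n)).tsum_le_tsum_of_inj _ (add_left_injective n)
      (fun m _ => by positivity) (fun k => le_rfl) hf
  have hjack : jackson q (a * q ^ n) (fun t => f t ^ 2) =
      (1 - q) * a * ∑' k : ℕ, q ^ (k + n) * f (a * q ^ (k + n)) ^ 2 := by
    simp only [jackson, pow_add, ← tsum_mul_left]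
    congr 1
    funext k
    ring_nf
  rw [norm2, norm2, hjack, jackson]
  gcongr

lemma abs_jackson_mul_le (hq0 : 0 ≤ q) (hq1 : q ≤ 1) (hx : 0 ≤ x) (hg : MemL2 q x g)
    (hh : MemL2 q x h) :
    |jackson q x (fun t => g t * h t)| ≤
      √(jackson q x (fun t => g t ^ 2)) * √(jackson q x (fun t => h t ^ 2)) := by
  have hc : 0 ≤ (1 - q) * x := mul_nonneg (sub_nonneg.2 hq1) hx
  have hw : ∀ n : ℕ, √(q ^ n) ^ 2 = q ^ n := fun n => sq_sqrt (pow_nonneg hq0 n)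
  set u : ℕ → ℝ := fun n => √(q ^ n) * g (x * q ^ n)
  set v : ℕ → ℝ := fun n => √(q ^ n) * h (x * q ^ n)
  have hu : (fun n => u n ^ 2) = fun n => q ^ n * g (x * q ^ n) ^ 2 := by
    funext n; simp only [u, mul_pow, hw]
  have hv : (fun n => v n ^ 2) = fun n => q ^ n * h (x * q ^ n) ^ 2 := by
    funext n; simp only [v, mul_pow, hw]
  have huv : (fun n => u n * v n) = fun n => q ^ n * (g (x * q ^ n) * h (x * q ^ n)) := by
    funext n; simp only [u, v]; linear_combination (g (x * q ^ n) * h (x * q ^ n)) * hw n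
  have hcs := Real.abs_tsum_mul_le_sqrt_mul_sqrt (u := u) (v := v) (hu ▸ hg) (hv ▸ hh)
  rw [hu, hv, huv] at hcs
  simp only [jackson]
  rw [abs_mul, abs_of_nonneg hc, sqrt_mul hc, sqrt_mul hc,
    mul_mul_mul_comm, mul_self_sqrt hc]
  exact mul_le_mul_of_nonneg_left hcs hc

lemma Ileft_zero : Ileft q α f 0 = 0 := by
  simp [Ileft, jackson]

lemma abs_Ileft_le (hq : 0 < q) (hq1 : q < 1) (hα : 0 < α) (hx : 0 < x) (hf : MemL2 q x f) :
    |Ileft q α f x| ≤ x ^ (α - 1 / 2) / qGamma q α *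
      √(jackson q 1 (fun ξ => poch q (q * ξ) (α - 1) ^ 2)) * norm2 q x f := by
  set K : ℝ → ℝ := fun ξ => poch q (q * ξ) (α - 1)
  have hI : Ileft q α f x = x ^ (α - 1) / qGamma q α * jackson q x (fun t => K (t / x) * f t) := by
    simp only [Ileft, K, mul_div_assoc]
  have hK : jackson q x (fun t => K (t / x) ^ 2) = x * jackson q 1 (fun ξ => K ξ ^ 2) :=
    jackson_comp_div (g := fun ξ => K ξ ^ 2) hx.ne'
  have hcs := abs_jackson_mul_le hq.le hq1.le hx.le
    ((memL2_poch_kernel hq hq1 hα).comp_div hx.ne') hf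
  rw [hK] at hcs
  have hpow : x ^ (α - 1) * √x = x ^ (α - 1 / 2) := by
    rw [sqrt_eq_rpow, ← rpow_add hx]
    ring_nf
  have hc : 0 ≤ x ^ (α - 1) / qGamma q α :=
    div_nonneg (rpow_nonneg hx.le _) (qGamma_pos hq.le hq1 hα).le
  calc |Ileft q α f x| = x ^ (α - 1) / qGamma q α * |jackson q x (fun t => K (t / x) * f t)| := by
        rw [hI, abs_mul, abs_of_nonneg hc]
    _ ≤ x ^ (α - 1) / qGamma q α * (√(x * jackson q 1 (fun ξ => K ξ ^ 2)) * norm2 q x f) :=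
        mul_le_mul_of_nonneg_left hcs hc
    _ = x ^ (α - 1 / 2) / qGamma q α * √(jackson q 1 (fun ξ => K ξ ^ 2)) * norm2 q x f := by
        rw [sqrt_mul hx.le, ← hpow]
        ring

end QFrac

open QFrac

/-- for `α > 1/2`, `I^α_{q,0^+}` maps `L²_q` into `C(A^*_{q,a})`
with the bound `‖I^α f‖_∞ ≤ M̃_α ‖f‖₂`. -/
theorem stmt10 (q a α : ℝ) (hq : 0 < q) (hq1 : q < 1) (ha : 0 < a)
    (hα : 1 / 2 < α) (f : ℝ → ℝ) (hf : QFrac.MemL2 q a f) :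
    QFrac.qRegular q a (QFrac.Ileft q α f) ∧
      QFrac.supNorm q a (QFrac.Ileft q α f) ≤
        (a ^ (α - 1 / 2) / QFrac.qGamma q α *
            Real.sqrt (QFrac.jackson q 1 (fun ξ => (QFrac.poch q (q * ξ) (α - 1)) ^ 2))) *
          QFrac.norm2 q a f := by
  set M := a ^ (α - 1 / 2) / qGamma q α *
    √(jackson q 1 (fun ξ => poch q (q * ξ) (α - 1) ^ 2)) * norm2 q a f
  have hα0 : 0 < α := by linarith
  have hΓ : 0 < qGamma q α := qGamma_pos hq.le hq1 hα0
  have hM : 0 ≤ M := mul_nonneg (mul_nonneg (div_nonneg (by positivity) hΓ.le) (sqrt_nonneg _))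
    (sqrt_nonneg _)
  have hρ0 : 0 ≤ q ^ (α - 1 / 2) := rpow_nonneg hq.le _
  have hρ1 : q ^ (α - 1 / 2) < 1 := rpow_lt_one hq.le hq1 (by linarith)
  have hgrid : ∀ n : ℕ, |Ileft q α f (a * q ^ n)| ≤ (q ^ (α - 1 / 2)) ^ n * M := fun n =>
    calc |Ileft q α f (a * q ^ n)|
        ≤ (a * q ^ n) ^ (α - 1 / 2) / qGamma q α *
            √(jackson q 1 (fun ξ => poch q (q * ξ) (α - 1) ^ 2)) * norm2 q (a * q ^ n) f :=
          abs_Ileft_le hq hq1 hα0 (by positivity) (hf.mul_pow hq n)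
      _ ≤ (a * q ^ n) ^ (α - 1 / 2) / qGamma q α *
            √(jackson q 1 (fun ξ => poch q (q * ξ) (α - 1) ^ 2)) * norm2 q a f := by
          gcongr
          exact norm2_mul_pow_le hq.le hq1.le ha.le hf n
      _ = (q ^ (α - 1 / 2)) ^ n * M := by
          rw [mul_rpow ha.le (by positivity), ← rpow_pow_comm hq.le]
          ring
  refine ⟨?_, max_le (ciSup_le fun n => ?_) (by rwa [Ileft_zero, abs_zero])⟩
  · rw [qRegular, Ileft_zero]
    refine squeeze_zero_norm (fun n => by simpa only [Real.norm_eq_abs] using hgrid n) ?_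
    simpa using (tendsto_pow_atTop_nhds_zero_of_lt_one hρ0 hρ1).mul_const M
  · exact (hgrid n).trans (mul_le_of_le_one_left hM (pow_le_one₀ hρ0 hρ1.le))
end
end
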